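/- arXiv:1007.1105 — 2 statements merged into one kernel-verified Lean document; each statement's English description precedes it below -/
import Mathlib

section
/- Let X be a non-empty set and let γ : X → [0,+∞), J : X → ℝ be two functions such that γ(x₀) = J(x₀) = 0 for some x₀ ∈ X. Assume that J takes at least four values. Let φ : ]−osc_X J, osc_X J[ → [0,+∞) be a continuous function such that (1) φ⁻¹(0) = {0}, and (2) min{ liminf_{t→(−osc_X J)⁺} φ(t), liminf_{t→(osc_X J)⁻} φ(t) } > 0. Put θ = inf { γ(x)/φ(J(x)) : x ∈ X, inf_X J < J(x) < sup_X J, J(x) ≠ 0 }. Then, for each μ > θ, one has sup_{λ ∈ ]inf_X J, sup_X J[} inf_{x∈X} ( γ(x) − μ·φ(J(x) − λ) ) < inf_{x∈X} sup_{λ ∈ ]inf_X J, sup_X J[} ( γ(x) − μ·φ(J(x) − λ) ). -/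
open Filter Set Topology

/-!
The right-hand side is non-negative: for each `x`, letting `λ → J x` inside `]inf J, sup J[`
gives `φ (J x - λ) → φ 0 = 0`, so the supremum over `λ` is at least `γ x ≥ 0`.

For the left-hand side, since `J` takes four values some `J x` avoids `inf J`, `sup J` and `0`,
and `μ > θ` then yields such a point `x₁` with `γ x₁ < μ φ (J x₁)`. Testing the infimum over `x`
only at `x₀` and `x₁` bounds the left-hand side by
`sup_λ min (-μ φ (-λ)) (γ x₁ - μ φ (J x₁ - λ))`. The second term is uniformly negative for `λ`
near `0`, and the first one for `λ` away from `0`, because `φ` has a positive lower bound on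
`{t : ε ≤ |t|}`: by compactness in the middle of its domain and by the positive lower limits
near the endpoints.
-/

namespace EReal

theorem coe_sub_lt_sub {a b : EReal} {s t : ℝ} (hs : (s : EReal) ≤ b) (ht : a ≤ t)
    (h : (s : EReal) < b ∨ a < t) : ((s - t : ℝ) : EReal) < b - a := by
  have ha : a ≠ ⊤ := ht.trans_lt (coe_lt_top t) |>.ne
  rw [EReal.lt_sub_iff_add_lt (.inr (coe_ne_top _)) (.inl ha)]
  have hst : ((s - t : ℝ) : EReal) + t = s := by rw [← coe_add, _root_.sub_add_cancel]
  rcases h with h | h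
  · exact (add_le_add le_rfl ht).trans_lt (hst ▸ h)
  · exact (add_lt_add_left_coe h _).trans_le (hst ▸ hs)

theorem coe_sub_mem_Ioo {a b : EReal} {s t : ℝ} (hs : (s : EReal) ∈ Icc a b)
    (ht : (t : EReal) ∈ Icc a b) (h : (s : EReal) ∈ Ioo a b ∨ (t : EReal) ∈ Ioo a b) :
    ((s - t : ℝ) : EReal) ∈ Ioo (-(b - a)) (b - a) := by
  refine ⟨?_, coe_sub_lt_sub hs.2 ht.1 (h.imp (·.2) (·.1))⟩
  rw [← _root_.neg_sub t s, coe_neg, neg_lt_neg_iff]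
  exact coe_sub_lt_sub ht.2 hs.1 (h.symm.imp (·.2) (·.1))

end EReal

theorem exists_pos_le_of_liminf_nhdsLT {f : ℝ → ℝ} {B : EReal} (hB : B ≠ ⊥)
    (h : 0 < liminf (fun t : ℝ => (f t : EReal)) (comap (↑) (𝓝[<] B))) :
    ∃ δ > 0, ∃ c : ℝ, (c : EReal) < B ∧ ∀ t : ℝ, c < t → (t : EReal) < B → δ ≤ f t := by
  obtain ⟨δ, hδ, hδlim⟩ := EReal.exists_between_coe_real h
  have hev := eventually_lt_of_lt_liminf hδlim
  rw [eventually_comap] at hev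
  obtain ⟨L, hLB, hL⟩ := (mem_nhdsLT_iff_exists_Ioo_subset' (bot_lt_iff_ne_bot.2 hB)).1 hev
  obtain ⟨c, hLc, hcB⟩ := EReal.exists_between_coe_real hLB
  refine ⟨δ, by exact_mod_cast hδ, c, hcB, fun t hct htB => ?_⟩
  exact_mod_cast (hL ⟨hLc.trans (by exact_mod_cast hct), htB⟩ t rfl).le

theorem exists_pos_le_of_liminf_nhdsGT {f : ℝ → ℝ} {A : EReal} (hA : A ≠ ⊤)
    (h : 0 < liminf (fun t : ℝ => (f t : EReal)) (comap (↑) (𝓝[>] A))) :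
    ∃ δ > 0, ∃ c : ℝ, A < c ∧ ∀ t : ℝ, t < c → A < t → δ ≤ f t := by
  obtain ⟨δ, hδ, hδlim⟩ := EReal.exists_between_coe_real h
  have hev := eventually_lt_of_lt_liminf hδlim
  rw [eventually_comap] at hev
  obtain ⟨U, hAU, hU⟩ := (mem_nhdsGT_iff_exists_Ioo_subset' (lt_top_iff_ne_top.2 hA)).1 hev
  obtain ⟨c, hAc, hcU⟩ := EReal.exists_between_coe_real hAU
  refine ⟨δ, by exact_mod_cast hδ, c, hAc, fun t htc hAt => ?_⟩
  exact_mod_cast (hU ⟨hAt, (by exact_mod_cast htc : (t : EReal) < c).trans hcU⟩ t rfl).le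

theorem exists_pos_le_on_isClosed {f : ℝ → ℝ} {A B : EReal} {K : Set ℝ} (hAB : A < B)
    (hcont : ContinuousOn f ((↑) ⁻¹' Ioo A B)) (hK : IsClosed K)
    (hpos : ∀ t ∈ K, A < t → (t : EReal) < B → 0 < f t)
    (hA : 0 < liminf (fun t : ℝ => (f t : EReal)) (comap (↑) (𝓝[>] A)))
    (hB : 0 < liminf (fun t : ℝ => (f t : EReal)) (comap (↑) (𝓝[<] B))) :
    ∃ δ > 0, ∀ t ∈ K, A < t → (t : EReal) < B → δ ≤ f t := by
  obtain ⟨δA, hδA, cA, hAcA, hfA⟩ := exists_pos_le_of_liminf_nhdsGT hAB.ne_top hA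
  obtain ⟨δB, hδB, cB, hcBB, hfB⟩ := exists_pos_le_of_liminf_nhdsLT hAB.ne_bot hB
  have hsub : Icc cA cB ⊆ (↑) ⁻¹' Ioo A B := fun t ht =>
    ⟨hAcA.trans_le (by exact_mod_cast ht.1),
      (by exact_mod_cast ht.2 : (t : EReal) ≤ cB).trans_lt hcBB⟩
  obtain ⟨δC, hδC, hfC⟩ := (isCompact_Icc.inter_right hK).exists_forall_le'
    (hcont.mono (inter_subset_left.trans hsub)) (a := 0)
    fun t ht => hpos t ht.2 (hsub ht.1).1 (hsub ht.1).2
  refine ⟨min δA (min δB δC), lt_min hδA (lt_min hδB hδC), fun t htK hAt htB => ?_⟩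
  rcases lt_or_ge t cA with htA | hAt'
  · exact (min_le_left _ _).trans (hfA t htA hAt)
  rcases lt_or_ge cB t with htB' | hBt
  · exact (min_le_right _ _).trans <| (min_le_left _ _).trans (hfB t htB' htB)
  · exact (min_le_right _ _).trans <| (min_le_right _ _).trans (hfC t ⟨⟨hAt', hBt⟩, htK⟩)

theorem mem_closure_coe_preimage_Ioo {a b : EReal} (hab : a < b) {t : ℝ} (ha : a ≤ t)
    (hb : (t : EReal) ≤ b) : t ∈ closure ((↑) ⁻¹' Ioo a b : Set ℝ) := by
  rw [← EReal.isOpenEmbedding_coe.isOpenMap.preimage_closure_eq_closure_preimage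
    continuous_coe_real_ereal, closure_Ioo hab.ne]
  exact ⟨ha, hb⟩

theorem ContinuousWithinAt.le_biSup_of_mem_closure {α β : Type*} [TopologicalSpace α]
    [CompleteLinearOrder β] [TopologicalSpace β] [OrderTopology β] {f : α → β} {S : Set α} {t : α}
    (hf : ContinuousWithinAt f S t) (ht : t ∈ closure S) : f t ≤ ⨆ x ∈ S, f x :=
  hf.closure_le ht continuousWithinAt_const fun _ hx => le_biSup f hx

theorem exists_ne_of_four_distinct {X β : Type*} {f : X → β}
    (h4 : ∃ x₁ x₂ x₃ x₄ : X, f x₁ ≠ f x₂ ∧ f x₁ ≠ f x₃ ∧ f x₁ ≠ f x₄ ∧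
      f x₂ ≠ f x₃ ∧ f x₂ ≠ f x₄ ∧ f x₃ ≠ f x₄) (p q r : β) :
    ∃ x, f x ≠ p ∧ f x ≠ q ∧ f x ≠ r := by
  obtain ⟨x₁, x₂, x₃, x₄, h⟩ := h4
  by_contra! hpqr
  have hf : ∀ x, f x = p ∨ f x = q ∨ f x = r := by grind
  rcases hf x₁ with h₁ | h₁ | h₁ <;> rcases hf x₂ with h₂ | h₂ | h₂ <;>
    rcases hf x₃ with h₃ | h₃ | h₃ <;> rcases hf x₄ with h₄ | h₄ | h₄ <;> simp_all

theorem exists_mem_Ioo_ne_zero {X : Type*} {J : X → ℝ}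
    (h4 : ∃ x₁ x₂ x₃ x₄ : X, J x₁ ≠ J x₂ ∧ J x₁ ≠ J x₃ ∧ J x₁ ≠ J x₄ ∧
      J x₂ ≠ J x₃ ∧ J x₂ ≠ J x₄ ∧ J x₃ ≠ J x₄) :
    ∃ x, (J x : EReal) ∈ Ioo (⨅ y, (J y : EReal)) (⨆ y, (J y : EReal)) ∧ J x ≠ 0 := by
  obtain ⟨x, hxa, hxb, hx0⟩ := exists_ne_of_four_distinct (f := fun x => (J x : EReal))
    (by simpa using h4) (⨅ y, (J y : EReal)) (⨆ y, (J y : EReal)) 0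
  exact ⟨x, ⟨(iInf_le _ x).lt_of_ne' hxa, (le_iSup (fun y => (J y : EReal)) x).lt_of_ne hxb⟩,
    by exact_mod_cast hx0⟩

theorem exists_lt_mul_of_sInf_div_lt {X : Type*} {P : X → Prop} {g h : X → ℝ}
    (hg : ∀ x, 0 ≤ g x) (hh : ∀ x, P x → 0 < h x) (hP : ∃ x, P x) {μ : ℝ}
    (hμ : sInf {r | ∃ x, P x ∧ r = g x / h x} < μ) : 0 < μ ∧ ∃ x, P x ∧ g x < μ * h x := by
  have hne : {r | ∃ x, P x ∧ r = g x / h x}.Nonempty :=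
    let ⟨x, hx⟩ := hP; ⟨_, x, hx, rfl⟩
  refine ⟨(le_csInf hne ?_).trans_lt hμ, ?_⟩
  · rintro _ ⟨x, hx, rfl⟩
    exact div_nonneg (hg x) (hh x hx).le
  · obtain ⟨_, ⟨x, hx, rfl⟩, hxμ⟩ := exists_lt_of_csInf_lt hne hμ
    exact ⟨x, hx, (div_lt_iff₀ (hh x hx)).1 hxμ⟩

theorem exists_pos_le_or_add_le {φ : ℝ → ℝ} {R : EReal}
    (hcont : ContinuousOn φ ((↑) ⁻¹' Ioo (-R) R))
    (hpos : ∀ t : ℝ, -R < t → (t : EReal) < R → t ≠ 0 → 0 < φ t)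
    (h₁ : 0 < liminf (fun t : ℝ => (φ t : EReal)) (comap (↑) (𝓝[>] (-R))))
    (h₂ : 0 < liminf (fun t : ℝ => (φ t : EReal)) (comap (↑) (𝓝[<] R)))
    {μ s c : ℝ} (hμ : 0 < μ) (hs : (s : EReal) ∈ Ioo (-R) R) (hc : c < μ * φ s) :
    ∃ d > 0, ∀ t : ℝ, -R < t → (t : EReal) < R → d ≤ μ * φ t ∨ c + d ≤ μ * φ (s + t) := by
  have hφs : ContinuousAt φ s :=
    hcont.continuousAt ((isOpen_Ioo.preimage continuous_coe_real_ereal).mem_nhds hs)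
  obtain ⟨ε, hε, hεs⟩ : ∃ ε > 0, ∀ t : ℝ, dist t 0 < ε → (c + μ * φ s) / 2 < μ * φ (s + t) :=
    Metric.eventually_nhds_iff.1 <| (continuousAt_const.mul (hφs.comp_of_eq
      (continuousAt_const.add continuousAt_id) (add_zero s))).eventually
      (lt_mem_nhds (by simpa using (by linarith : (c + μ * φ s) / 2 < μ * φ s)))
  obtain ⟨δ, hδ, hφδ⟩ := exists_pos_le_on_isClosed (hs.1.trans hs.2) hcont
    (K := {t | ε ≤ |t|}) (isClosed_le continuous_const continuous_abs)
    (fun t ht h₁ h₂ => hpos t h₁ h₂ (abs_pos.1 (hε.trans_le ht))) h₁ h₂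
  refine ⟨min (μ * δ) ((μ * φ s - c) / 2), lt_min (mul_pos hμ hδ) (by linarith),
    fun t h₁ h₂ => ?_⟩
  rcases lt_or_ge |t| ε with ht | ht
  · have := hεs t (by rwa [Real.dist_0_eq_abs])
    exact .inr (by linarith [min_le_right (μ * δ) ((μ * φ s - c) / 2)])
  · exact .inl ((min_le_left _ _).trans (mul_le_mul_of_nonneg_left (hφδ t ht h₁ h₂) hμ.le))

theorem le_biSup_sub_mul {φ : ℝ → ℝ} (hφ : ContinuousAt φ 0) (hφ₀ : φ 0 = 0) {S : Set ℝ}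
    {t : ℝ} (ht : t ∈ closure S) (c μ : ℝ) :
    (c : EReal) ≤ ⨆ lam ∈ S, ((c - μ * φ (t - lam) : ℝ) : EReal) := by
  have hf : ContinuousAt (fun lam => ((c - μ * φ (t - lam) : ℝ) : EReal)) t :=
    continuous_coe_real_ereal.continuousAt.comp <| continuousAt_const.sub <|
      continuousAt_const.mul <| hφ.comp_of_eq (continuousAt_const.sub continuousAt_id) (sub_self t)
  simpa only [sub_self, hφ₀, mul_zero, sub_zero] using
    hf.continuousWithinAt.le_biSup_of_mem_closure ht

/-- Proposition 1 of the paper. `X` is a non-empty set, `γ : X → [0,∞)`,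
`J : X → ℝ`, with `γ(x₀) = J(x₀) = 0` for some `x₀`, `J` taking at least
four values; `φ` is a continuous non-negative function on
`]-osc_X J, osc_X J[` (where `osc_X J = sup_X J - inf_X J`, possibly `+∞`)
vanishing exactly at `0`, with positive lower limits at the two endpoints.
With `θ = inf { γ(x)/φ(J(x)) : inf_X J < J(x) < sup_X J, J(x) ≠ 0 }`,
for every `μ > θ` one has
`sup_{λ ∈ ]inf J, sup J[} inf_x (γ(x) - μ φ(J(x)-λ)) <
 inf_x sup_{λ ∈ ]inf J, sup J[} (γ(x) - μ φ(J(x)-λ))`.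
Infima and suprema that may be infinite are taken in `EReal`. -/
theorem proposition_one
    {X : Type*} (γ : X → ℝ) (J : X → ℝ) (x₀ : X)
    (hγnn : ∀ x, 0 ≤ γ x) (hγ₀ : γ x₀ = 0) (hJ₀ : J x₀ = 0)
    -- `J` takes at least four values
    (h4 : ∃ x₁ x₂ x₃ x₄ : X, J x₁ ≠ J x₂ ∧ J x₁ ≠ J x₃ ∧ J x₁ ≠ J x₄ ∧
      J x₂ ≠ J x₃ ∧ J x₂ ≠ J x₄ ∧ J x₃ ≠ J x₄)
    (φ : ℝ → ℝ)
    -- `φ` is defined, continuous and non-negative on `]-osc_X J, osc_X J[`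
    (hφcont : ContinuousOn φ
      {t : ℝ | -((⨆ x : X, (J x : EReal)) - ⨅ x : X, (J x : EReal)) < (t : EReal) ∧
        (t : EReal) < (⨆ x : X, (J x : EReal)) - ⨅ x : X, (J x : EReal)})
    (hφnn : ∀ t : ℝ,
      -((⨆ x : X, (J x : EReal)) - ⨅ x : X, (J x : EReal)) < (t : EReal) →
      (t : EReal) < (⨆ x : X, (J x : EReal)) - ⨅ x : X, (J x : EReal) →
      0 ≤ φ t)
    -- condition (1): `φ⁻¹(0) = {0}`
    (hφzero : ∀ t : ℝ,
      -((⨆ x : X, (J x : EReal)) - ⨅ x : X, (J x : EReal)) < (t : EReal) →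
      (t : EReal) < (⨆ x : X, (J x : EReal)) - ⨅ x : X, (J x : EReal) →
      (φ t = 0 ↔ t = 0))
    -- condition (2): positive lower limits at the endpoints of the interval
    (hφlim₁ : 0 < liminf (fun t : ℝ => (φ t : EReal))
      (comap (fun t : ℝ => (t : EReal))
        (𝓝[>] (-((⨆ x : X, (J x : EReal)) - ⨅ x : X, (J x : EReal))))))
    (hφlim₂ : 0 < liminf (fun t : ℝ => (φ t : EReal))
      (comap (fun t : ℝ => (t : EReal))
        (𝓝[<] ((⨆ x : X, (J x : EReal)) - ⨅ x : X, (J x : EReal)))))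
    -- `θ`
    (θ : ℝ)
    (hθ : θ = sInf {r : ℝ | ∃ x : X,
      (⨅ y : X, (J y : EReal)) < (J x : EReal) ∧
      (J x : EReal) < (⨆ y : X, (J y : EReal)) ∧ J x ≠ 0 ∧
      r = γ x / φ (J x)})
    (μ : ℝ) (hμ : θ < μ) :
    (⨆ lam : ℝ, ⨆ _ : (⨅ y : X, (J y : EReal)) < (lam : EReal) ∧
        (lam : EReal) < (⨆ y : X, (J y : EReal)),
      ⨅ x : X, ((γ x - μ * φ (J x - lam) : ℝ) : EReal)) <
    ⨅ x : X, ⨆ lam : ℝ, ⨆ _ : (⨅ y : X, (J y : EReal)) < (lam : EReal) ∧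
        (lam : EReal) < (⨆ y : X, (J y : EReal)),
      ((γ x - μ * φ (J x - lam) : ℝ) : EReal) := by
  set a : EReal := ⨅ y : X, (J y : EReal)
  set b : EReal := ⨆ y : X, (J y : EReal)
  have h₀ : ((0 : ℝ) : EReal) ∈ Icc a b :=
    hJ₀ ▸ ⟨iInf_le _ x₀, le_iSup (fun y => (J y : EReal)) x₀⟩
  have hφpos : ∀ t : ℝ, -(b - a) < t → (t : EReal) < b - a → t ≠ 0 → 0 < φ t :=
    fun t h₁ h₂ ht => (hφnn t h₁ h₂).lt_of_ne' (mt (hφzero t h₁ h₂).1 ht)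
  have hJD : ∀ x, (J x : EReal) ∈ Ioo a b → (J x : EReal) ∈ Ioo (-(b - a)) (b - a) :=
    fun x hx => by simpa using EReal.coe_sub_mem_Ioo (Ioo_subset_Icc_self hx) h₀ (.inl hx)
  obtain ⟨hμ₀, x₁, ⟨hx₁, -⟩, hγx₁⟩ := exists_lt_mul_of_sInf_div_lt hγnn
    (fun x hx => hφpos (J x) (hJD x hx.1).1 (hJD x hx.1).2 hx.2) (exists_mem_Ioo_ne_zero h4)
    (by simpa only [mem_Ioo, and_assoc] using hθ ▸ hμ)
  obtain ⟨d, hd, hbound⟩ :=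
    exists_pos_le_or_add_le hφcont hφpos hφlim₁ hφlim₂ hμ₀ (hJD x₁ hx₁) hγx₁
  have hab : a < b := hx₁.1.trans hx₁.2
  have h0D : ((0 : ℝ) : EReal) ∈ Ioo (-(b - a)) (b - a) := by
    rw [EReal.coe_zero]
    exact ⟨EReal.neg_lt_zero.2 (EReal.sub_pos.2 hab), EReal.sub_pos.2 hab⟩
  have hφc₀ : ContinuousAt φ 0 :=
    hφcont.continuousAt ((isOpen_Ioo.preimage continuous_coe_real_ereal).mem_nhds h0D)
  calc _ ≤ ((-d : ℝ) : EReal) := iSup₂_le fun lam hlam => by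
        obtain ⟨h₁, h₂⟩ : ((-lam : ℝ) : EReal) ∈ Ioo (-(b - a)) (b - a) := by
          simpa using EReal.coe_sub_mem_Ioo h₀ (Ioo_subset_Icc_self hlam) (.inr hlam)
        rcases hbound (-lam) h₁ h₂ with h | h
        · refine (iInf_le _ x₀).trans (EReal.coe_le_coe_iff.2 ?_)
          simp only [hγ₀, hJ₀, zero_sub]; linarith
        · refine (iInf_le _ x₁).trans (EReal.coe_le_coe_iff.2 ?_)
          rw [← sub_eq_add_neg] at h; linarith
    _ < ((0 : ℝ) : EReal) := EReal.coe_lt_coe_iff.2 (neg_neg_of_pos hd)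
    _ ≤ _ := le_iInf fun x => (EReal.coe_le_coe_iff.2 (hγnn x)).trans <|
      le_biSup_sub_mul hφc₀ ((hφzero 0 h0D.1 h0D.2).2 rfl)
        (mem_closure_coe_preimage_Ioo hab (iInf_le _ x) (le_iSup (fun y => (J y : EReal)) x)) _ _
end

section
/- Let X be a non-empty set, let ψ, J : X → ℝ be functions, and let μ > 0. Assume that inf_{x∈X} ( ψ(x) − μ(e^{J(x)} − 1) ) < 0 ≤ inf_{x∈X} ( ψ(x) − μ·J(x) ) and that the set {x ∈ X : J(x) ≠ 0} is non-empty. Then 0 ≤ inf { (ψ(x) − μ·J(x))/(e^{J(x)} − J(x) − 1) : x ∈ X, J(x) ≠ 0 } < μ. -/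
open Filter Set Topology

/-- The inequality established at the start of the proof of Theorem 3 of
the paper: if `μ > 0`,
`inf_x (ψ(x) - μ(e^{J(x)} - 1)) < 0 ≤ inf_x (ψ(x) - μ J(x))`
(infima taken in `EReal`), and `{x : J(x) ≠ 0}` is non-empty, then
`0 ≤ inf { (ψ(x) - μ J(x)) / (e^{J(x)} - J(x) - 1) : J(x) ≠ 0 } < μ`. -/
theorem theta_hat_lt_mu
    {X : Type*} [Nonempty X] (ψ J : X → ℝ) (μ : ℝ) (hμ : 0 < μ)
    (h6₁ : (⨅ x : X, ((ψ x - μ * (Real.exp (J x) - 1) : ℝ) : EReal)) < 0)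
    (h6₂ : (0 : EReal) ≤ ⨅ x : X, ((ψ x - μ * J x : ℝ) : EReal))
    (hne : ∃ x : X, J x ≠ 0) :
    0 ≤ sInf {r : ℝ | ∃ x : X, J x ≠ 0 ∧
        r = (ψ x - μ * J x) / (Real.exp (J x) - J x - 1)} ∧
    sInf {r : ℝ | ∃ x : X, J x ≠ 0 ∧
        r = (ψ x - μ * J x) / (Real.exp (J x) - J x - 1)} < μ := by
  set S : Set ℝ := {r : ℝ | ∃ x : X, J x ≠ 0 ∧
      r = (ψ x - μ * J x) / (Real.exp (J x) - J x - 1)} with hS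
  -- numerator nonneg pointwise
  have hnum : ∀ x : X, 0 ≤ ψ x - μ * J x := by
    intro x
    have := le_trans h6₂ (iInf_le _ x)
    exact_mod_cast this
  -- denominator positive when J x ≠ 0
  have hden : ∀ x : X, J x ≠ 0 → 0 < Real.exp (J x) - J x - 1 := by
    intro x hx
    have := Real.add_one_lt_exp hx
    linarith
  have hSnonneg : ∀ r ∈ S, (0 : ℝ) ≤ r := by
    rintro r ⟨x, hx, rfl⟩
    exact div_nonneg (hnum x) (hden x hx).le
  have hbdd : BddBelow S := ⟨0, fun r hr => hSnonneg r hr⟩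
  -- witness from h6₁
  obtain ⟨x, hx⟩ : ∃ x : X, ((ψ x - μ * (Real.exp (J x) - 1) : ℝ) : EReal) < 0 := by
    simpa using iInf_lt_iff.mp h6₁
  have hx' : ψ x - μ * (Real.exp (J x) - 1) < 0 := by exact_mod_cast hx
  have hJx : J x ≠ 0 := by
    intro h
    have h1 := hnum x
    rw [h] at hx' h1
    simp at hx' h1
    linarith
  have hd := hden x hJx
  have hlt : (ψ x - μ * J x) / (Real.exp (J x) - J x - 1) < μ := by
    rw [div_lt_iff₀ hd]
    nlinarith
  have hmem : (ψ x - μ * J x) / (Real.exp (J x) - J x - 1) ∈ S := ⟨x, hJx, rfl⟩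
  refine ⟨Real.sInf_nonneg hSnonneg, lt_of_le_of_lt (csInf_le hbdd hmem) hlt⟩
end
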